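/- arXiv:2103.00717 — 3 statements merged into one kernel-verified Lean document; each statement's English description precedes it below -/
import Mathlib

section
/- Let u* = (x*, y*) be a local minimizer of the problem min{ p(x) : (x,y) ∈ K }, where K is a convex subset of [0,1]^n × ℝ^q and p(x) = Σ_{i=1}^n min(x_i, 1-x_i). Then the affine function l_{u*} satisfies l_{u*}(x) ≥ l_{u*}(x*) for all (x,y) ∈ K. -/
open Finset Set

/-!
The penalty `p(x) = ∑ min(xᵢ, 1 - xᵢ)` is a pointwise minimum of affine functions, and `l_{u*}`
is the one among them that touches `p` at `x*`. Hence `l_{u*} ≥ p` everywhere with equality at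
`x*`, so the local minimizer `u*` of `p` on `K` is also a local minimizer of the affine function
`l_{u*}` on `K`; for a convex function on a convex set a local minimum is a global one.
-/

section BinaryPenalty

variable {n : ℕ}

noncomputable def binaryPenalty (x : Fin n → ℝ) : ℝ := ∑ i, min (x i) (1 - x i)

noncomputable def penaltyLinearization (xs x : Fin n → ℝ) : ℝ :=
  ∑ i ∈ univ.filter (fun i => xs i ≤ 1/2), x i
    + ∑ j ∈ univ.filter (fun j => ¬ xs j ≤ 1/2), (1 - x j)

theorem binaryPenalty_le_penaltyLinearization (xs x : Fin n → ℝ) :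
    binaryPenalty x ≤ penaltyLinearization xs x := by
  rw [binaryPenalty, penaltyLinearization,
    ← sum_filter_add_sum_filter_not univ (fun i => xs i ≤ 1/2)]
  gcongr
  · exact min_le_left _ _
  · exact min_le_right _ _

theorem penaltyLinearization_self (xs : Fin n → ℝ) :
    penaltyLinearization xs xs = binaryPenalty xs := by
  rw [binaryPenalty, penaltyLinearization,
    ← sum_filter_add_sum_filter_not univ (fun i => xs i ≤ 1/2)]
  congr 1 <;> refine sum_congr rfl fun i hi => ?_ <;> rw [mem_filter] at hi
  · exact (min_eq_left (by linarith [hi.2])).symm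
  · exact (min_eq_right (by linarith [not_le.mp hi.2])).symm

theorem penaltyLinearization_affineCombination (xs x y : Fin n → ℝ) {a b : ℝ} (hab : a + b = 1) :
    penaltyLinearization xs (a • x + b • y)
      = a * penaltyLinearization xs x + b * penaltyLinearization xs y := by
  have hcompl : ∀ j, 1 - (a • x + b • y) j = a * (1 - x j) + b * (1 - y j) := fun j => by
    simp only [Pi.add_apply, Pi.smul_apply, smul_eq_mul]
    linear_combination -hab
  rw [penaltyLinearization, sum_congr rfl fun j _ => hcompl j]
  simp only [penaltyLinearization, Pi.add_apply, Pi.smul_apply, smul_eq_mul,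
    sum_add_distrib, ← mul_sum]
  ring

theorem convexOn_penaltyLinearization_fst {E : Type*} [AddCommGroup E] [Module ℝ E]
    {K : Set ((Fin n → ℝ) × E)} (hK : Convex ℝ K) (xs : Fin n → ℝ) :
    ConvexOn ℝ K (fun u => penaltyLinearization xs u.1) :=
  ⟨hK, fun u _ v _ a b _ _ hab => by
    simp only [Prod.fst_add, Prod.smul_fst, smul_eq_mul,
      penaltyLinearization_affineCombination xs u.1 v.1 hab, le_refl]⟩

end BinaryPenalty

theorem stmt_5_general (n q : ℕ)
    (K : Set ((Fin n → ℝ) × (Fin q → ℝ)))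
    (hKconv : Convex ℝ K)
    (xs : Fin n → ℝ) (ys : Fin q → ℝ) (hu : (xs, ys) ∈ K)
    (hloc : ∃ r > (0:ℝ), ∀ u ∈ K, ‖u - (xs, ys)‖ < r →
      (∑ i, min (xs i) (1 - xs i)) ≤ ∑ i, min (u.1 i) (1 - u.1 i)) :
    ∀ u ∈ K,
      (∑ i ∈ univ.filter (fun i => xs i ≤ 1/2), u.1 i
        + ∑ j ∈ univ.filter (fun j => ¬ xs j ≤ 1/2), (1 - u.1 j))
      ≥ (∑ i ∈ univ.filter (fun i => xs i ≤ 1/2), xs i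
        + ∑ j ∈ univ.filter (fun j => ¬ xs j ≤ 1/2), (1 - xs j)) := by
  obtain ⟨r, hr, hloc⟩ := hloc
  have hlocalMin : IsLocalMinOn (fun u => penaltyLinearization xs u.1) K (xs, ys) := by
    filter_upwards [self_mem_nhdsWithin, mem_nhdsWithin_of_mem_nhds (Metric.ball_mem_nhds _ hr)]
      with u huK hur
    calc penaltyLinearization xs xs = binaryPenalty xs := penaltyLinearization_self xs
      _ ≤ binaryPenalty u.1 := hloc u huK (by rwa [← dist_eq_norm])
      _ ≤ penaltyLinearization xs u.1 := binaryPenalty_le_penaltyLinearization xs u.1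
  intro u huK
  exact IsMinOn.of_isLocalMinOn_of_convexOn hu hlocalMin
    (convexOn_penaltyLinearization_fst hKconv xs) huK

/-- If u* = (x*,y*) is a local minimizer of p over the convex set
K ⊆ [0,1]^n × ℝ^q, then l_{u*}(x) ≥ l_{u*}(x*) for all (x,y) ∈ K. -/
theorem stmt_5 (n q : ℕ) (hn : 1 ≤ n)
    (K : Set ((Fin n → ℝ) × (Fin q → ℝ)))
    (hKne : K.Nonempty) (hKconv : Convex ℝ K)
    (hKbox : ∀ u ∈ K, ∀ i, u.1 i ∈ Set.Icc (0:ℝ) 1)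
    (xs : Fin n → ℝ) (ys : Fin q → ℝ) (hu : (xs, ys) ∈ K)
    (hloc : ∃ r > (0:ℝ), ∀ u ∈ K, ‖u - (xs, ys)‖ < r →
      (∑ i, min (xs i) (1 - xs i)) ≤ ∑ i, min (u.1 i) (1 - u.1 i)) :
    ∀ u ∈ K,
      (∑ i ∈ univ.filter (fun i => xs i ≤ 1/2), u.1 i
        + ∑ j ∈ univ.filter (fun j => ¬ xs j ≤ 1/2), (1 - u.1 j))
      ≥ (∑ i ∈ univ.filter (fun i => xs i ≤ 1/2), xs i
        + ∑ j ∈ univ.filter (fun j => ¬ xs j ≤ 1/2), (1 - xs j)) :=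
  stmt_5_general n q K hKconv xs ys hu hloc
end

section
/- Type-II DC cut validity: suppose u* = (x*, y*) ∈ K with p(x*) ∉ ℤ, and suppose the valid inequality l_{u*}(x) ≥ l_{u*}(x*) holds for all (x,y) ∈ K. Then u* violates the inequality l_{u*}(x) ≥ ⌈l_{u*}(x*)⌉, while every point (x,y) ∈ K with x ∈ {0,1}^n satisfies l_{u*}(x) ≥ ⌈l_{u*}(x*)⌉. -/
/-! `l_{u*}` agrees with `p` at `x*`, so `l_{u*}(x*)` is not an integer and lies strictly below
its ceiling. At a binary `x`, `l_{u*}(x)` is an integer that is at least `l_{u*}(x*)`, hence at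
least its ceiling. -/

open Finset Set

theorem exists_intCast_sum_of_binary {ι : Type*} {s : Finset ι} {f : ι → ℝ}
    (hf : ∀ i ∈ s, f i = 0 ∨ f i = 1) : ∃ z : ℤ, ∑ i ∈ s, f i = z := by
  refine ⟨∑ i ∈ s, if f i = 0 then 0 else 1, ?_⟩
  push_cast
  refine sum_congr rfl fun i hi => ?_
  rcases hf i hi with h | h <;> simp [h]

theorem lt_ceil_of_not_exists_intCast {a : ℝ} (ha : ¬ ∃ z : ℤ, a = z) : a < ⌈a⌉ :=
  (Int.le_ceil a).lt_of_ne fun h => ha ⟨⌈a⌉, h⟩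

/-- The paper's `l_{u*}` with `xs = x*`. -/
noncomputable def dcForm {ι : Type*} [Fintype ι] (xs x : ι → ℝ) : ℝ :=
  ∑ i ∈ univ.filter (fun i => xs i ≤ 1/2), x i
    + ∑ j ∈ univ.filter (fun j => ¬ xs j ≤ 1/2), (1 - x j)

section dcForm

variable {ι : Type*} [Fintype ι]

theorem dcForm_self (xs : ι → ℝ) : dcForm xs xs = ∑ i, min (xs i) (1 - xs i) := by
  rw [dcForm, ← sum_filter_add_sum_filter_not univ (fun i => xs i ≤ 1/2)]
  congr 1
  · refine sum_congr rfl fun i hi => ?_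
    have := (mem_filter.mp hi).2
    rw [min_eq_left (by linarith)]
  · refine sum_congr rfl fun i hi => ?_
    have := not_le.mp (mem_filter.mp hi).2
    rw [min_eq_right (by linarith)]

theorem exists_intCast_dcForm_of_binary (xs : ι → ℝ) {x : ι → ℝ}
    (hx : ∀ i, x i = 0 ∨ x i = 1) : ∃ z : ℤ, dcForm xs x = z := by
  obtain ⟨z₀, hz₀⟩ := exists_intCast_sum_of_binary (s := univ.filter (fun i => xs i ≤ 1/2))
    fun i _ => hx i
  obtain ⟨z₁, hz₁⟩ := exists_intCast_sum_of_binary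
    (s := univ.filter (fun j => ¬ xs j ≤ 1/2)) (f := fun j => 1 - x j)
    fun j _ => (hx j).symm.imp (by simp [·]) (by simp [·])
  exact ⟨z₀ + z₁, by rw [dcForm, hz₀, hz₁]; push_cast; rfl⟩

end dcForm

theorem stmt_8_general (n q : ℕ)
    (K : Set ((Fin n → ℝ) × (Fin q → ℝ)))
    (xs : Fin n → ℝ)
    (hnotint : ¬ ∃ z : ℤ, (∑ i, min (xs i) (1 - xs i)) = (z : ℝ))
    (hvalid : ∀ u ∈ K,
      (∑ i ∈ univ.filter (fun i => xs i ≤ 1/2), u.1 i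
        + ∑ j ∈ univ.filter (fun j => ¬ xs j ≤ 1/2), (1 - u.1 j))
      ≥ (∑ i ∈ univ.filter (fun i => xs i ≤ 1/2), xs i
        + ∑ j ∈ univ.filter (fun j => ¬ xs j ≤ 1/2), (1 - xs j))) :
    (∑ i ∈ univ.filter (fun i => xs i ≤ 1/2), xs i
        + ∑ j ∈ univ.filter (fun j => ¬ xs j ≤ 1/2), (1 - xs j))
      < (⌈(∑ i ∈ univ.filter (fun i => xs i ≤ 1/2), xs i
        + ∑ j ∈ univ.filter (fun j => ¬ xs j ≤ 1/2), (1 - xs j))⌉ : ℝ)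
    ∧ ∀ u ∈ K, (∀ i, u.1 i = 0 ∨ u.1 i = 1) →
      (∑ i ∈ univ.filter (fun i => xs i ≤ 1/2), u.1 i
        + ∑ j ∈ univ.filter (fun j => ¬ xs j ≤ 1/2), (1 - u.1 j))
      ≥ (⌈(∑ i ∈ univ.filter (fun i => xs i ≤ 1/2), xs i
        + ∑ j ∈ univ.filter (fun j => ¬ xs j ≤ 1/2), (1 - xs j))⌉ : ℝ) := by
  change dcForm xs xs < ⌈dcForm xs xs⌉ ∧
    ∀ u ∈ K, (∀ i, u.1 i = 0 ∨ u.1 i = 1) → dcForm xs u.1 ≥ ⌈dcForm xs xs⌉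
  refine ⟨lt_ceil_of_not_exists_intCast (dcForm_self xs ▸ hnotint), fun u hu hbin => ?_⟩
  obtain ⟨z, hz⟩ := exists_intCast_dcForm_of_binary xs hbin
  have hcut := hvalid u hu
  change dcForm xs u.1 ≥ dcForm xs xs at hcut
  rw [hz] at hcut ⊢
  exact_mod_cast Int.ceil_le.mpr hcut

/-- Type-II DC cut validity. If u* = (x*,y*) ∈ K with p(x*) ∉ ℤ and
the valid inequality l_{u*}(x) ≥ l_{u*}(x*) holds on K, then u* violates
l_{u*}(x) ≥ ⌈l_{u*}(x*)⌉ while every (x,y) ∈ K with x binary satisfies it. -/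
theorem stmt_8 (n q : ℕ) (hn : 1 ≤ n)
    (K : Set ((Fin n → ℝ) × (Fin q → ℝ))) (hKne : K.Nonempty)
    (hKbox : ∀ u ∈ K, ∀ i, u.1 i ∈ Set.Icc (0:ℝ) 1)
    (xs : Fin n → ℝ) (ys : Fin q → ℝ) (hu : (xs, ys) ∈ K)
    (hnotint : ¬ ∃ z : ℤ, (∑ i, min (xs i) (1 - xs i)) = (z : ℝ))
    (hvalid : ∀ u ∈ K,
      (∑ i ∈ univ.filter (fun i => xs i ≤ 1/2), u.1 i
        + ∑ j ∈ univ.filter (fun j => ¬ xs j ≤ 1/2), (1 - u.1 j))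
      ≥ (∑ i ∈ univ.filter (fun i => xs i ≤ 1/2), xs i
        + ∑ j ∈ univ.filter (fun j => ¬ xs j ≤ 1/2), (1 - xs j))) :
    (∑ i ∈ univ.filter (fun i => xs i ≤ 1/2), xs i
        + ∑ j ∈ univ.filter (fun j => ¬ xs j ≤ 1/2), (1 - xs j))
      < (⌈(∑ i ∈ univ.filter (fun i => xs i ≤ 1/2), xs i
        + ∑ j ∈ univ.filter (fun j => ¬ xs j ≤ 1/2), (1 - xs j))⌉ : ℝ)
    ∧ ∀ u ∈ K, (∀ i, u.1 i = 0 ∨ u.1 i = 1) →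
      (∑ i ∈ univ.filter (fun i => xs i ≤ 1/2), u.1 i
        + ∑ j ∈ univ.filter (fun j => ¬ xs j ≤ 1/2), (1 - u.1 j))
      ≥ (⌈(∑ i ∈ univ.filter (fun i => xs i ≤ 1/2), xs i
        + ∑ j ∈ univ.filter (fun j => ¬ xs j ≤ 1/2), (1 - xs j))⌉ : ℝ) :=
  stmt_8_general n q K xs hnotint hvalid
end

section
/- Local optimality of DCA critical points away from 1/2: let u* = (x*,y*) ∈ K with x*_i ≠ 1/2 for all i, and suppose ⟨∇(−h)(u*), u − u*⟩ ≥ 0 for all u ∈ K, where h(x,y) = −f(x,y) − t·p(x) is differentiable at u*. Then u* is a local minimizer of f + t·p over K. -/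
/-! Away from `1/2` each tent function `min x (1 - x)` is affine, so near `x*` the objective
`f + t·p` is affine and its increase from `u*` is exactly the linearised increase
`⟨∇(−h)(u*), u − u*⟩`, which is nonnegative on `K`. -/

open Finset Filter Topology

lemma min_one_sub_sub_eq_of_abs_lt {a b : ℝ} (h : |b - a| < |a - 1/2|) :
    min b (1 - b) - min a (1 - a) = (if a < 1/2 then 1 else -1) * (b - a) := by
  rw [abs_lt] at h
  split_ifs with ha
  · rw [abs_of_neg (by linarith)] at h
    rw [min_eq_left (by linarith), min_eq_left (by linarith)]
    ring
  · rw [abs_of_nonneg (by linarith)] at h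
    rw [min_eq_right (by linarith), min_eq_right (by linarith)]
    ring

theorem stmt_17_general (n q : ℕ)
    (c : Fin n → ℝ) (d : Fin q → ℝ) (t : ℝ)
    (K : Set ((Fin n → ℝ) × (Fin q → ℝ)))
    (xs : Fin n → ℝ) (ys : Fin q → ℝ)
    (hhalf : ∀ i, xs i ≠ 1/2)
    (hgrad : ∀ u ∈ K,
      (∑ i, (c i + t * (if xs i < 1/2 then (1:ℝ) else -1)) * (u.1 i - xs i))
        + (∑ j, d j * (u.2 j - ys j)) ≥ 0) :
    ∃ r > (0:ℝ), ∀ u ∈ K, ‖u - (xs, ys)‖ < r →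
      (∑ i, c i * xs i) + (∑ j, d j * ys j) + t * ∑ i, min (xs i) (1 - xs i)
        ≤ (∑ i, c i * u.1 i) + (∑ j, d j * u.2 j)
          + t * ∑ i, min (u.1 i) (1 - u.1 i) := by
  have hnear : ∀ᶠ u in 𝓝 (xs, ys), ∀ i, |u.1 i - xs i| < |xs i - 1/2| :=
    eventually_all.2 fun i => ContinuousAt.eventually_lt (by fun_prop) continuousAt_const
      (by simpa [sub_eq_zero] using hhalf i)
  obtain ⟨r, hr, hball⟩ := Metric.eventually_nhds_iff.1 hnear
  refine ⟨r, hr, fun u hu hur => ?_⟩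
  have hlocal : ∑ i, min (u.1 i) (1 - u.1 i) - ∑ i, min (xs i) (1 - xs i)
      = ∑ i, (if xs i < 1/2 then (1:ℝ) else -1) * (u.1 i - xs i) := by
    rw [← sum_sub_distrib]
    exact sum_congr rfl fun i _ =>
      min_one_sub_sub_eq_of_abs_lt (hball (by rwa [dist_eq_norm]) i)
  have hstat := hgrad u hu
  simp only [add_mul, mul_assoc, sum_add_distrib, ← mul_sum, ← hlocal] at hstat
  simp only [mul_sub, sum_sub_distrib] at hstat
  linarith

/-- Local optimality of DCA critical points away from 1/2.
If u* = (x*,y*) ∈ K with x*_i ≠ 1/2 for all i, and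
⟨∇(−h)(u*), u − u*⟩ ≥ 0 for all u ∈ K where −h = f + t·p has gradient
((c_i + t·z_i)_i, d) with z_i = 1 if x*_i < 1/2 and z_i = −1 otherwise,
then u* is a local minimizer of f + t·p over K. -/
theorem stmt_17 (n q : ℕ) (hn : 1 ≤ n)
    (c : Fin n → ℝ) (d : Fin q → ℝ) (t : ℝ) (ht : 0 ≤ t)
    (K : Set ((Fin n → ℝ) × (Fin q → ℝ)))
    (hKne : K.Nonempty) (hKconv : Convex ℝ K)
    (hKbox : ∀ u ∈ K, ∀ i, u.1 i ∈ Set.Icc (0:ℝ) 1)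
    (xs : Fin n → ℝ) (ys : Fin q → ℝ) (hu : (xs, ys) ∈ K)
    (hhalf : ∀ i, xs i ≠ 1/2)
    (hgrad : ∀ u ∈ K,
      (∑ i, (c i + t * (if xs i < 1/2 then (1:ℝ) else -1)) * (u.1 i - xs i))
        + (∑ j, d j * (u.2 j - ys j)) ≥ 0) :
    ∃ r > (0:ℝ), ∀ u ∈ K, ‖u - (xs, ys)‖ < r →
      (∑ i, c i * xs i) + (∑ j, d j * ys j) + t * ∑ i, min (xs i) (1 - xs i)
        ≤ (∑ i, c i * u.1 i) + (∑ j, d j * u.2 j)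
          + t * ∑ i, min (u.1 i) (1 - u.1 i) :=
  stmt_17_general n q c d t K xs ys hhalf hgrad
end
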